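/- Let Λ be a compact metric space, k ≥ 2 an integer, and Δ = Δ_k(Λ) the fat diagonal. Let ν and (μ_T)_{T∈ℕ} be Borel probability measures on Λ^k such that μ_T converges weakly to ν. Let f : Λ^k → ℝ be Borel measurable, continuous on Λ^k \ Δ, integrable with respect to ν and with respect to each μ_T, and suppose ν(Δ) = 0. Suppose (B_R)_{R>0} is a family of open subsets of Λ^k with Δ ⊆ B_R for all R > 0, B_{R'} ⊆ B_R whenever 0 < R' ≤ R, ∩_{R>0} B_R = Δ, and that there is R_0 > 0 such that for every R ∈ (0, R_0), lim_{T→∞} ∫_{B_R} |f| dμ_T = 0. Then lim_{T→∞} ∫_{Λ^k} f dμ_T = ∫_{Λ^k} f dν. -/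
import Mathlib

open MeasureTheory Filter Topology
open scoped ENNReal NNReal

/-- Key estimate: if `|f - h| ≤ 1_S·|f|` pointwise then the integrals of `f` and `h`
differ by at most `∫_S |f|`. -/
lemma statement6_est {α : Type*} [MeasurableSpace α] (μ : Measure α) [IsFiniteMeasure μ]
    (f h : α → ℝ) (S : Set α) (hS : MeasurableSet S)
    (hfint : Integrable f μ) (hhm : AEStronglyMeasurable h μ)
    (hbound : ∀ x, |f x - h x| ≤ S.indicator (fun y => |f y|) x) :
    |∫ x, f x ∂μ - ∫ x, h x ∂μ| ≤ ∫ x in S, |f x| ∂μ := by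
  have hind : Integrable (S.indicator (fun y => |f y|)) μ := hfint.abs.indicator hS
  have hhint : Integrable h μ := by
    refine (hfint.abs.add hind).mono' hhm (ae_of_all _ fun x => ?_)
    have := hbound x
    have h1 : ‖h x‖ = |h x| := rfl
    calc |h x| ≤ |f x - h x| + |f x| := by
          have := abs_sub_abs_le_abs_sub (h x) (f x)
          have h2 : |h x - f x| = |f x - h x| := abs_sub_comm _ _
          linarith [abs_sub_abs_le_abs_sub (h x) (f x)]
      _ ≤ |f x| + S.indicator (fun y => |f y|) x := by linarith
  rw [← integral_sub hfint hhint]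
  calc |∫ x, (f x - h x) ∂μ| ≤ ∫ x, |f x - h x| ∂μ := by
        simpa [Real.norm_eq_abs] using norm_integral_le_integral_norm (fun x => f x - h x) (μ := μ)
    _ ≤ ∫ x, S.indicator (fun y => |f y|) x ∂μ :=
        integral_mono (hfint.sub hhint).abs hind hbound
    _ = ∫ x in S, |f x| ∂μ := integral_indicator hS

/-- Let `Λ` be a compact metric space, `k ≥ 2`, and `Δ` the fat diagonal
in `Λ^k`. If probability measures `μ_T → ν` weakly, `f : Λ^k → ℝ` is Borel measurable,
continuous off `Δ`, integrable w.r.t. `ν` and each `μ_T`, `ν(Δ) = 0`, and `(B_R)_{R>0}`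
is a nested family of open neighbourhoods of `Δ` with `⋂_{R>0} B_R = Δ` such that
`∫_{B_R} |f| dμ_T → 0` for all sufficiently small `R > 0`, then
`∫ f dμ_T → ∫ f dν`. -/
theorem statement6
    {Λ : Type*} [MetricSpace Λ] [CompactSpace Λ] [MeasurableSpace Λ] [BorelSpace Λ]
    (k : ℕ) (hk : 2 ≤ k)
    (Δ : Set (Fin k → Λ)) (hΔ : Δ = {x : Fin k → Λ | ∃ i j, i ≠ j ∧ x i = x j})
    (ν : ProbabilityMeasure (Fin k → Λ)) (μT : ℕ → ProbabilityMeasure (Fin k → Λ))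
    (hconv : Tendsto μT atTop (𝓝 ν))
    (f : (Fin k → Λ) → ℝ) (hfm : Measurable f) (hfc : ContinuousOn f Δᶜ)
    (hfν : Integrable f (ν : Measure (Fin k → Λ)))
    (hfμ : ∀ T : ℕ, Integrable f (μT T : Measure (Fin k → Λ)))
    (hνΔ : (ν : Measure (Fin k → Λ)) Δ = 0)
    (B : ℝ → Set (Fin k → Λ))
    (hBopen : ∀ R : ℝ, 0 < R → IsOpen (B R))
    (hBsub : ∀ R : ℝ, 0 < R → Δ ⊆ B R)
    (hBmono : ∀ R R' : ℝ, 0 < R' → R' ≤ R → B R' ⊆ B R)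
    (hBinter : ⋂ (R : ℝ) (_ : 0 < R), B R = Δ)
    (hBlim : ∃ R₀ : ℝ, 0 < R₀ ∧ ∀ R : ℝ, 0 < R → R < R₀ →
      Tendsto (fun T : ℕ => ∫ x in B R, |f x| ∂(μT T : Measure (Fin k → Λ)))
        atTop (𝓝 0)) :
    Tendsto (fun T : ℕ => ∫ x, f x ∂(μT T : Measure (Fin k → Λ))) atTop
      (𝓝 (∫ x, f x ∂(ν : Measure (Fin k → Λ)))) := by
  obtain ⟨R₀, hR₀, hBlim⟩ := hBlim
  -- Δ is closed
  have hΔclosed : IsClosed Δ := by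
    rw [hΔ]
    have heq : {x : Fin k → Λ | ∃ i j, i ≠ j ∧ x i = x j}
        = ⋃ (i : Fin k), ⋃ (j : Fin k), ⋃ (_ : i ≠ j), {x : Fin k → Λ | x i = x j} := by
      ext x; simp
    rw [heq]
    exact isClosed_iUnion_of_finite fun i => isClosed_iUnion_of_finite fun j =>
      isClosed_iUnion_of_finite fun _ =>
        isClosed_eq (continuous_apply i) (continuous_apply j)
  have hΔmeas : MeasurableSet Δ := hΔclosed.measurableSet
  have hΔcopen : IsOpen Δᶜ := hΔclosed.isOpen_compl
  -- Δ is nonempty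
  have hne : Nonempty (Fin k → Λ) := ν.nonempty
  have hΔne : Δ.Nonempty := by
    obtain ⟨x⟩ := hne
    refine ⟨fun _ => x ⟨0, by omega⟩, ?_⟩
    rw [hΔ]
    exact ⟨⟨0, by omega⟩, ⟨1, by omega⟩, by simp [Fin.ext_iff], rfl⟩
  set d : (Fin k → Λ) → ℝ := fun x => Metric.infDist x Δ with hd
  have hdcont : Continuous d := Metric.continuous_infDist_pt Δ
  -- choice of small R with ν-integral of |f| over B R small
  have hνsmall : ∀ ε : ℝ, 0 < ε → ∃ R : ℝ, 0 < R ∧ R < R₀ ∧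
      ∫ x in B R, |f x| ∂(ν : Measure (Fin k → Λ)) < ε := by
    intro ε hε
    set r : ℕ → ℝ := fun n => R₀ / (n + 2) with hr
    have hrpos : ∀ n, 0 < r n := fun n => by positivity
    have hrlt : ∀ n, r n < R₀ := by
      intro n
      rw [hr]
      rw [div_lt_iff₀ (by positivity)]
      nlinarith [Nat.cast_nonneg (α := ℝ) n]
    have hr0 : Tendsto r atTop (𝓝 0) := by
      apply Tendsto.div_atTop (tendsto_const_nhds)
      exact tendsto_atTop_add_const_right _ 2 tendsto_natCast_atTop_atTop
    have hDCT : Tendsto (fun n => ∫ x, (B (r n)).indicator (fun y => |f y|) x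
        ∂(ν : Measure (Fin k → Λ))) atTop
        (𝓝 (∫ x, Δ.indicator (fun y => |f y|) x ∂(ν : Measure (Fin k → Λ)))) := by
      refine tendsto_integral_of_dominated_convergence (fun x => |f x|)
        (fun n => ((hfm.abs.indicator ((hBopen _ (hrpos n)).measurableSet)).aestronglyMeasurable))
        hfν.abs (fun n => ae_of_all _ fun x => ?_) (ae_of_all _ fun x => ?_)
      · by_cases hx : x ∈ B (r n) <;>
          simp [Set.indicator_apply, hx, Real.norm_eq_abs, abs_abs, abs_nonneg]
      · by_cases hx : x ∈ Δ
        · have : ∀ n, (B (r n)).indicator (fun y => |f y|) x = |f x| := fun n =>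
            Set.indicator_of_mem (hBsub _ (hrpos n) hx) _
          simp only [this, Set.indicator_of_mem hx]
          exact tendsto_const_nhds
        · have hx' : x ∉ ⋂ (R : ℝ) (_ : 0 < R), B R := by rw [hBinter]; exact hx
          simp only [Set.mem_iInter, not_forall] at hx'
          obtain ⟨R, hRpos, hxR⟩ := hx'
          have hev : ∀ᶠ n in atTop, (B (r n)).indicator (fun y => |f y|) x = 0 := by
            filter_upwards [hr0.eventually_lt_const hRpos] with n hn
            exact Set.indicator_of_notMem
              (fun hmem => hxR (hBmono R (r n) (hrpos n) hn.le hmem)) _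
          rw [Set.indicator_of_notMem hx]
          exact Tendsto.congr' (by filter_upwards [hev] with n hn; exact hn.symm)
            tendsto_const_nhds
    have hzero : ∫ x, Δ.indicator (fun y => |f y|) x ∂(ν : Measure (Fin k → Λ)) = 0 := by
      rw [integral_indicator hΔmeas, Measure.restrict_eq_zero.mpr hνΔ, integral_zero_measure]
    rw [hzero] at hDCT
    have := (hDCT.eventually_lt_const hε).exists
    obtain ⟨n, hn⟩ := this
    refine ⟨r n, hrpos n, hrlt n, ?_⟩
    rwa [integral_indicator ((hBopen _ (hrpos n)).measurableSet)] at hn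
  -- main argument
  rw [Metric.tendsto_atTop]
  intro ε hε
  obtain ⟨R, hRpos, hRlt, hRν⟩ := hνsmall (ε / 3) (by positivity)
  -- positive distance between Δ and (B R)ᶜ
  obtain ⟨δ, hδpos, hδ⟩ : ∃ δ : ℝ, 0 < δ ∧ ∀ x ∈ (B R)ᶜ, 2 * δ ≤ d x := by
    rcases Set.eq_empty_or_nonempty ((B R)ᶜ) with hemp | hneK
    · exact ⟨1, one_pos, fun x hx => absurd hx (by simp [hemp])⟩
    · have hKc : IsCompact ((B R)ᶜ) := ((hBopen R hRpos).isClosed_compl).isCompact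
      obtain ⟨x₀, hx₀, hmin⟩ := hKc.exists_isMinOn hneK hdcont.continuousOn
      have hx₀Δ : x₀ ∉ Δ := fun hmem => hx₀ (hBsub R hRpos hmem)
      have hdx₀ : 0 < d x₀ := (hΔclosed.notMem_iff_infDist_pos hΔne).mp hx₀Δ
      exact ⟨d x₀ / 2, by linarith, fun x hx => by
        have := hmin hx; simp only [Set.mem_setOf_eq] at this; linarith⟩
  -- cutoff function
  set φ : (Fin k → Λ) → ℝ := fun x => max 0 (min 1 (d x / δ - 1)) with hφ
  have hφcont : Continuous φ :=
    continuous_const.max (continuous_const.min ((hdcont.div_const δ).sub continuous_const))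
  have hφ0 : ∀ x, 0 ≤ φ x := fun x => le_max_left _ _
  have hφ1 : ∀ x, φ x ≤ 1 := fun x => max_le zero_le_one (min_le_left _ _)
  have hφzero : ∀ x, d x < δ → φ x = 0 := by
    intro x hx
    have h1 : d x / δ - 1 ≤ 0 := by
      rw [sub_nonpos, div_le_one hδpos]; linarith
    show (0:ℝ) ⊔ 1 ⊓ (d x / δ - 1) = 0
    exact max_eq_left (min_le_of_right_le h1)
  have hφone : ∀ x, x ∈ (B R)ᶜ → φ x = 1 := by
    intro x hx
    have h2 : 2 * δ ≤ d x := hδ x hx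
    have h1 : (1 : ℝ) ≤ d x / δ - 1 := by
      rw [le_sub_iff_add_le, le_div_iff₀ hδpos]; linarith
    show (0:ℝ) ⊔ 1 ⊓ (d x / δ - 1) = 1
    rw [min_eq_left h1, max_eq_right zero_le_one]
  -- the continuous truncation h
  set h : (Fin k → Λ) → ℝ := fun x => φ x * f x with hh
  have hhcont : Continuous h := by
    rw [continuous_iff_continuousAt]
    intro x
    by_cases hx : d x < δ
    · have hmem : {y | d y < δ} ∈ 𝓝 x := (isOpen_lt hdcont continuous_const).mem_nhds hx
      refine ContinuousAt.congr (continuousAt_const (y := (0:ℝ))) ?_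
      filter_upwards [hmem] with y hy
      simp [hh, hφzero y hy]
    · push_neg at hx
      have hxΔ : x ∉ Δ := by
        intro hmem
        have hz : d x = 0 := Metric.infDist_zero_of_mem hmem
        have hx' : δ ≤ d x := hx
        linarith
      have hfx : ContinuousAt f x := hfc.continuousAt (hΔcopen.mem_nhds hxΔ)
      exact (hφcont.continuousAt).mul hfx
  -- pointwise bound |f - h| ≤ 1_{B R} |f|
  have hbound : ∀ x, |f x - h x| ≤ (B R).indicator (fun y => |f y|) x := by
    intro x
    by_cases hx : x ∈ B R
    · rw [Set.indicator_of_mem hx]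
      have : f x - h x = (1 - φ x) * f x := by rw [hh]; ring
      rw [this, abs_mul]
      have h01 : |1 - φ x| ≤ 1 := by
        rw [abs_le]; constructor <;> [linarith [hφ1 x]; linarith [hφ0 x]]
      calc |1 - φ x| * |f x| ≤ 1 * |f x| := by
            exact mul_le_mul_of_nonneg_right h01 (abs_nonneg _)
        _ = |f x| := one_mul _
    · have hfh : h x = f x := by
        show φ x * f x = f x
        rw [hφone x hx, one_mul]
      rw [Set.indicator_of_notMem hx, hfh]
      simp
  have hBRmeas : MeasurableSet (B R) := (hBopen R hRpos).measurableSet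
  -- weak convergence applied to h
  have hweak : Tendsto (fun T => ∫ x, h x ∂(μT T : Measure (Fin k → Λ))) atTop
      (𝓝 (∫ x, h x ∂(ν : Measure (Fin k → Λ)))) := by
    have := MeasureTheory.ProbabilityMeasure.tendsto_iff_forall_integral_tendsto.mp hconv
      (BoundedContinuousFunction.mkOfCompact ⟨h, hhcont⟩)
    simpa using this
  obtain ⟨N₁, hN₁⟩ := Metric.tendsto_atTop.mp hweak (ε / 3) (by positivity)
  obtain ⟨N₂, hN₂⟩ := eventually_atTop.mp
    ((hBlim R hRpos hRlt).eventually_lt_const (show (0:ℝ) < ε / 3 by positivity))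
  refine ⟨max N₁ N₂, fun T hT => ?_⟩
  have hT₁ : N₁ ≤ T := le_trans (le_max_left _ _) hT
  have hT₂ : N₂ ≤ T := le_trans (le_max_right _ _) hT
  have e1 := statement6_est (μT T : Measure (Fin k → Λ)) f h (B R) hBRmeas (hfμ T)
    hhcont.aestronglyMeasurable hbound
  have e3 := statement6_est (ν : Measure (Fin k → Λ)) f h (B R) hBRmeas hfν
    hhcont.aestronglyMeasurable hbound
  have e2 := hN₁ T hT₁
  rw [Real.dist_eq] at e2 ⊢
  have e1' : |∫ x, f x ∂(μT T : Measure (Fin k → Λ))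
      - ∫ x, h x ∂(μT T : Measure (Fin k → Λ))| < ε / 3 :=
    lt_of_le_of_lt e1 (hN₂ T hT₂)
  have e3' : |∫ x, f x ∂(ν : Measure (Fin k → Λ))
      - ∫ x, h x ∂(ν : Measure (Fin k → Λ))| < ε / 3 :=
    lt_of_le_of_lt e3 hRν
  set a := ∫ x, f x ∂(μT T : Measure (Fin k → Λ))
  set b := ∫ x, h x ∂(μT T : Measure (Fin k → Λ))
  set c := ∫ x, h x ∂(ν : Measure (Fin k → Λ))
  set e := ∫ x, f x ∂(ν : Measure (Fin k → Λ))
  calc |a - e| ≤ |a - b| + |b - e| := abs_sub_le a b e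
    _ ≤ |a - b| + (|b - c| + |c - e|) := by linarith [abs_sub_le b c e]
    _ < ε / 3 + (ε / 3 + ε / 3) := by
        have : |c - e| = |e - c| := abs_sub_comm _ _
        rw [this]
        linarith
    _ = ε := by ring
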